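/- arXiv:2506.22764 — 8 statements merged into one kernel-verified Lean document; each statement's English description precedes it below -/
import Mathlib

section
/- If f : ℝ → ℝ is twice differentiable with M-Lipschitz second derivative (M > 0), then for all x, y ∈ ℝ, f'(y) - f'(x) - f''(x)(y-x) ≥ -M/2·(y-x)² + (1/(4M))·(f''(y) - f''(x) + M(y-x))². -/
/-- If `G'` is nonnegative to the right of `p` and nonpositive to the left,
then `G` has a global minimum at `p`. -/
lemma min_at_of_deriv_sign (G G' : ℝ → ℝ) (hG : ∀ u, HasDerivAt G (G' u) u) (p : ℝ)
    (h1 : ∀ c, p < c → 0 ≤ G' c) (h2 : ∀ c, c < p → G' c ≤ 0) (z : ℝ) : G p ≤ G z := by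
  rcases lt_trichotomy p z with h | h | h
  · obtain ⟨c, hc, hceq⟩ := exists_hasDerivAt_eq_slope G G' h
      (fun u _ => (hG u).continuousAt.continuousWithinAt) (fun u _ => hG u)
    have hs : 0 ≤ (G z - G p) / (z - p) := hceq ▸ h1 c hc.1
    have hzp : (0:ℝ) < z - p := by linarith
    have h' : 0 ≤ (G z - G p) / (z - p) * (z - p) := mul_nonneg hs hzp.le
    rw [div_mul_cancel₀ _ hzp.ne'] at h'
    linarith
  · simp [h]
  · obtain ⟨c, hc, hceq⟩ := exists_hasDerivAt_eq_slope G G' h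
      (fun u _ => (hG u).continuousAt.continuousWithinAt) (fun u _ => hG u)
    have hs : (G p - G z) / (p - z) ≤ 0 := hceq ▸ h2 c hc.2
    have hzp : (0:ℝ) < p - z := by linarith
    have h' : (G p - G z) / (p - z) * (p - z) ≤ 0 := mul_nonpos_of_nonpos_of_nonneg hs hzp.le
    rw [div_mul_cancel₀ _ hzp.ne'] at h'
    linarith

/-- Refined smoothness inequality for the first derivative of a function with
M-Lipschitz second derivative. -/
theorem refined_first_derivative_bound (M : ℝ) (hM : 0 < M) (f f' f'' : ℝ → ℝ)
    (hf' : ∀ x, HasDerivAt f (f' x) x)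
    (hf'' : ∀ x, HasDerivAt f' (f'' x) x)
    (hLip : ∀ x y, |f'' x - f'' y| ≤ M * |x - y|) :
    ∀ x y : ℝ,
      f' y - f' x - f'' x * (y - x) ≥
        -(M / 2) * (y - x) ^ 2 + (1 / (4 * M)) * (f'' y - f'' x + M * (y - x)) ^ 2 := by
  intro x y
  -- convexified function with pivot x
  set g : ℝ → ℝ := fun u => f' u + M / 2 * u ^ 2 - (f'' x + M * x) * u with hg
  set g' : ℝ → ℝ := fun u => f'' u + M * u - (f'' x + M * x) with hg'
  have hgd : ∀ u, HasDerivAt g (g' u) u := by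
    intro u
    have h1 : HasDerivAt (fun u : ℝ => M / 2 * u ^ 2) (M / 2 * (2 * u)) u := by
      simpa using (hasDerivAt_pow 2 u).const_mul (M / 2)
    have h2 : HasDerivAt (fun u : ℝ => (f'' x + M * x) * u) (f'' x + M * x) u := by
      simpa using (hasDerivAt_id u).const_mul (f'' x + M * x)
    have := ((hf'' u).add h1).sub h2
    refine this.congr_deriv ?_
    simp [hg']; ring
  -- Lipschitz bounds in convenient form
  have hlip' : ∀ a b : ℝ, f'' a - f'' b ≤ M * |a - b| ∧ -(M * |a - b|) ≤ f'' a - f'' b := by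
    intro a b
    have := hLip a b
    constructor <;> [exact le_trans (le_abs_self _) this;
      exact le_trans (neg_le_neg this) (neg_abs_le _)]
  -- g has a global minimum at x
  have hmin : ∀ z, g x ≤ g z := by
    apply min_at_of_deriv_sign g g' hgd x
    · intro c hc
      have h := (hlip' c x).2
      have habs : |c - x| = c - x := abs_of_pos (by linarith)
      simp only [hg']
      rw [habs] at h
      nlinarith
    · intro c hc
      have h := (hlip' c x).1
      have habs : |c - x| = -(c - x) := abs_of_neg (by linarith)
      simp only [hg']
      rw [habs] at h
      nlinarith
  -- descent lemma at y : g z ≤ g y + g' y * (z - y) + M * (z - y)^2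
  have hdesc : ∀ z, g z ≤ g y + g' y * (z - y) + M * (z - y) ^ 2 := by
    intro z
    set F : ℝ → ℝ := fun u => g y + g' y * (u - y) + M * (u - y) ^ 2 - g u with hF
    set F' : ℝ → ℝ := fun u => g' y + M * (2 * (u - y)) - g' u with hF'
    have hFd : ∀ u, HasDerivAt F (F' u) u := by
      intro u
      have h1 : HasDerivAt (fun u : ℝ => g' y * (u - y)) (g' y) u := by
        simpa using ((hasDerivAt_id u).sub_const y).const_mul (g' y)
      have h2 : HasDerivAt (fun u : ℝ => M * (u - y) ^ 2) (M * (2 * (u - y))) u := by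
        simpa using (((hasDerivAt_id u).sub_const y).pow 2).const_mul M
      have := ((h1.const_add (g y)).add h2).sub (hgd u)
      exact this
    have hFmin : ∀ z, F y ≤ F z := by
      apply min_at_of_deriv_sign F F' hFd y
      · intro c hc
        have h := (hlip' c y).1
        have habs : |c - y| = c - y := abs_of_pos (by linarith)
        rw [habs] at h
        simp only [hF', hg']
        nlinarith
      · intro c hc
        have h := (hlip' c y).2
        have habs : |c - y| = -(c - y) := abs_of_neg (by linarith)
        rw [habs] at h
        simp only [hF', hg']
        nlinarith
    have := hFmin z
    simp only [hF] at this
    nlinarith [this]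
  -- combine with z = y - g' y / (2M)
  have hz := hdesc (y - g' y / (2 * M))
  have hx := hmin (y - g' y / (2 * M))
  have key : g x ≤ g y - (g' y) ^ 2 / (4 * M) := by
    have hM' : (2 * M) ≠ 0 := by positivity
    have h4 : (4 * M) ≠ 0 := by positivity
    calc g x ≤ g (y - g' y / (2 * M)) := hx
      _ ≤ g y + g' y * ((y - g' y / (2 * M)) - y) + M * ((y - g' y / (2 * M)) - y) ^ 2 := hz
      _ = g y - (g' y) ^ 2 / (4 * M) := by field_simp; ring
  simp only [hg, hg'] at key
  have hsq : (f'' y + M * y - (f'' x + M * x)) ^ 2 = (f'' y - f'' x + M * (y - x)) ^ 2 := by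
    ring
  rw [hsq] at key
  have hdiv : (f'' y - f'' x + M * (y - x)) ^ 2 / (4 * M) =
      1 / (4 * M) * (f'' y - f'' x + M * (y - x)) ^ 2 := by ring
  rw [hdiv] at key
  have hring : f' y - f' x - f'' x * (y - x) + M / 2 * (y - x) ^ 2 =
      (f' y + M / 2 * y ^ 2 - (f'' x + M * x) * y) -
        (f' x + M / 2 * x ^ 2 - (f'' x + M * x) * x) := by ring
  linarith
end

section
/- If f : ℝ → ℝ is twice differentiable with M-Lipschitz second derivative (M > 0), and x, y ∈ ℝ satisfy |f''(x) - f''(y)| < M|x-y|, then f(y) - f(x) - f'(x)(y-x) - f''(x)/2·(y-x)² ≥ -M/6·|y-x|³ + (f'(y) - f'(x) - f''(x)(y-x) + (M/2)(y-x)|y-x|)²/(2(f''(y) - f''(x) + M|y-x|)) + (f''(y) - f''(x) + M|y-x|)³/(96 M²). -/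
open intervalIntegral Set MeasureTheory

lemma ftc_aux {F F' : ℝ → ℝ} (h : ∀ t, HasDerivAt F (F' t) t)
    (hc : Continuous F') (a b : ℝ) : ∫ t in a..b, F' t = F b - F a :=
  integral_eq_sub_of_hasDerivAt (fun t _ => h t) (hc.intervalIntegrable a b)

lemma poly_ftc (c₀ c₁ c₂ p q : ℝ) :
    ∫ t in p..q, (c₀ + c₁ * t + c₂ * t ^ 2) =
      (c₀ * q + c₁ * q ^ 2 / 2 + c₂ * q ^ 3 / 3) -
        (c₀ * p + c₁ * p ^ 2 / 2 + c₂ * p ^ 3 / 3) := by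
  have h : ∀ t : ℝ, HasDerivAt (fun t => c₀ * t + c₁ * t ^ 2 / 2 + c₂ * t ^ 3 / 3)
      (c₀ + c₁ * t + c₂ * t ^ 2) t := by
    intro t
    have h1 := (hasDerivAt_id t).const_mul c₀
    have h2 := ((hasDerivAt_pow 2 t).const_mul c₁).div_const 2
    have h3 := ((hasDerivAt_pow 3 t).const_mul c₂).div_const 3
    refine ((h1.add h2).add h3).congr_deriv ?_
    simp
    ring
  exact ftc_aux h (by fun_prop) p q

lemma pftc_cont (c₀ c₁ c₂ : ℝ) : Continuous (fun t : ℝ => c₀ + c₁ * t + c₂ * t ^ 2) := by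
  fun_prop

set_option maxHeartbeats 2000000 in
lemma core (M : ℝ) (hM : 0 < M) (u : ℝ → ℝ) (hc : Continuous u)
    (hmono : ∀ ⦃s t : ℝ⦄, s ≤ t → u s ≤ u t)
    (hlip : ∀ ⦃s t : ℝ⦄, s ≤ t → u t - u s ≤ 2 * M * (t - s))
    (x y : ℝ) (hxy : x < y) (hux : u x = 0) (hpos : 0 < u y)
    (hlt : u y < 2 * M * (y - x)) :
    (∫ t in x..y, u t) ^ 2 / (2 * u y) + (u y) ^ 3 / (96 * M ^ 2)
      ≤ ∫ t in x..y, (y - t) * u t := by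
  obtain ⟨Δ, hΔdef⟩ : ∃ Δ : ℝ, u y = Δ := ⟨_, rfl⟩
  obtain ⟨U, hUdef⟩ : ∃ U : ℝ → ℝ, U = fun t => ∫ s in x..t, u s := ⟨_, rfl⟩
  obtain ⟨S, hSdef⟩ : ∃ S : ℝ, S = ∫ t in x..y, u t := ⟨_, rfl⟩
  rw [hΔdef, ← hSdef]
  have hpos : 0 < Δ := hΔdef ▸ hpos
  have hlt : Δ < 2 * M * (y - x) := hΔdef ▸ hlt
  have huy : u y = Δ := hΔdef
  clear hΔdef
  obtain ⟨h, hhdef⟩ : ∃ h : ℝ, h = Δ / (2 * M) := ⟨_, rfl⟩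
  have hM2 : (0:ℝ) < 2 * M := by linarith
  have hh : 0 < h := hhdef ▸ div_pos hpos hM2
  have hΔh : Δ = 2 * M * h := by rw [hhdef]; field_simp
  clear hhdef
  have hhd : h < y - x := by nlinarith
  have hU : ∀ t, HasDerivAt U (u t) t := by
    intro t
    rw [hUdef]
    exact integral_hasDerivAt_right (hc.intervalIntegrable x t)
      (hc.stronglyMeasurableAtFilter _ _) hc.continuousAt
  have hUc : Continuous U := (Differentiable.continuous fun t => (hU t).differentiableAt)
  have hUx : U x = 0 := by rw [hUdef]; exact integral_same
  have hUy : U y = S := by rw [hUdef, hSdef]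
  have hu0 : ∀ t, x ≤ t → 0 ≤ u t := fun t ht => hux ▸ hmono ht
  have huΔ : ∀ t, t ≤ y → u t ≤ Δ := fun t ht => huy ▸ hmono ht
  have hUadd : ∀ t, U t + ∫ s in t..y, u s = S := by
    intro t
    rw [hUdef, hSdef]
    exact integral_add_adjacent_intervals (hc.intervalIntegrable _ _) (hc.intervalIntegrable _ _)
  -- lower bound on S
  have hS1 : M * h ^ 2 ≤ S := by
    have hsplit : (∫ t in x..(y-h), u t) + (∫ t in (y-h)..y, u t) = S := by
      rw [hSdef]
      exact integral_add_adjacent_intervals (hc.intervalIntegrable _ _) (hc.intervalIntegrable _ _)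
    have hp1 : 0 ≤ ∫ t in x..(y-h), u t :=
      integral_nonneg (by linarith) (fun t ht => hu0 t ht.1)
    have hp2 : ∫ t in (y-h)..y, ((Δ - 2*M*y) + 2*M*t + 0*t^2) ≤ ∫ t in (y-h)..y, u t := by
      refine integral_mono_on (by linarith) ((pftc_cont _ _ _).intervalIntegrable _ _)
        (hc.intervalIntegrable _ _) (fun t ht => ?_)
      have := hlip ht.2
      rw [huy] at this
      nlinarith
    rw [poly_ftc] at hp2
    nlinarith [hp2, hp1, hsplit]
  -- upper bound on S
  have hS2 : S ≤ M * h ^ 2 + Δ * (y - x - h) := by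
    have hsplit : (∫ t in x..(x+h), u t) + (∫ t in (x+h)..y, u t) = S := by
      rw [hSdef]
      exact integral_add_adjacent_intervals (hc.intervalIntegrable _ _) (hc.intervalIntegrable _ _)
    have hp1 : ∫ t in x..(x+h), u t ≤ ∫ t in x..(x+h), ((-(2*M*x)) + 2*M*t + 0*t^2) := by
      refine integral_mono_on (by linarith) (hc.intervalIntegrable _ _)
        ((pftc_cont _ _ _).intervalIntegrable _ _) (fun t ht => ?_)
      have := hlip ht.1
      nlinarith [hux]
    have hp2 : ∫ t in (x+h)..y, u t ≤ ∫ t in (x+h)..y, (Δ : ℝ) :=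
      integral_mono_on (by linarith) (hc.intervalIntegrable _ _) intervalIntegrable_const
        (fun t ht => huΔ t ht.2)
    rw [poly_ftc] at hp1
    rw [intervalIntegral.integral_const, smul_eq_mul] at hp2
    nlinarith [hp1, hp2, hsplit]
  obtain ⟨K, hKdef⟩ : ∃ K : ℝ, K = S / Δ - h / 2 := ⟨_, rfl⟩
  have hΔK : Δ * K = S - M * h ^ 2 := by
    rw [hKdef, mul_sub, mul_div_cancel₀ _ (ne_of_gt hpos)]
    nlinarith [hΔh]
  have hK0 : 0 ≤ K := by
    rw [hKdef, sub_nonneg, le_div_iff₀ hpos]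
    nlinarith
  clear hKdef
  obtain ⟨b, hbdef⟩ : ∃ b : ℝ, b = y - K := ⟨_, rfl⟩
  obtain ⟨a, hadef⟩ : ∃ a : ℝ, a = b - h := ⟨_, rfl⟩
  have hxa : x ≤ a := by
    have h1 : Δ * K ≤ Δ * (y - x - h) := by nlinarith
    have h2 : K ≤ y - x - h := (mul_le_mul_iff_right₀ hpos).mp h1
    rw [hadef, hbdef]; linarith
  have hby : b ≤ y := by rw [hbdef]; linarith
  have hab : a ≤ b := by rw [hadef]; linarith
  have hyb : y - b = K := by rw [hbdef]; ring
  have hba : b - a = h := by rw [hadef]; ring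
  -- pointwise bounds on U
  have hUnn : ∀ t, x ≤ t → 0 ≤ U t := by
    intro t ht
    rw [hUdef]
    exact integral_nonneg ht (fun s hs => hu0 s hs.1)
  have hUlow : ∀ t, x ≤ t → t ≤ y → S - Δ * (y - t) ≤ U t := by
    intro t ht1 ht2
    have hadd := hUadd t
    have hb2 : ∫ s in t..y, u s ≤ ∫ s in t..y, (Δ:ℝ) :=
      integral_mono_on ht2 (hc.intervalIntegrable _ _) intervalIntegrable_const
        (fun s hs => huΔ s hs.2)
    rw [intervalIntegral.integral_const, smul_eq_mul] at hb2
    nlinarith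
  -- T = ∫ U
  have hTU : ∫ t in x..y, (y - t) * u t = ∫ t in x..y, U t := by
    have hF : ∀ t, HasDerivAt (fun t => (y - t) * U t) ((y - t) * u t - U t) t := by
      intro t
      have h1 : HasDerivAt (fun t : ℝ => y - t) (-1) t := (hasDerivAt_id t).const_sub y
      refine (h1.mul (hU t)).congr_deriv ?_
      ring
    have h0 : ∫ t in x..y, ((y - t) * u t - U t) = 0 := by
      rw [ftc_aux hF (by fun_prop) x y, hUx]
      ring
    have hsub : ∫ t in x..y, ((y - t) * u t - U t)
        = (∫ t in x..y, (y - t) * u t) - ∫ t in x..y, U t := intervalIntegral.integral_sub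
      (((continuous_const.sub continuous_id').mul hc).intervalIntegrable x y)
      (hUc.intervalIntegrable x y)
    rw [h0] at hsub
    linarith [hsub.symm]
  -- piece 1
  have hP1 : 0 ≤ ∫ t in x..a, U t :=
    integral_nonneg hxa (fun t ht => hUnn t ht.1)
  -- piece 2 : concavity
  have hP2 : M * h ^ 3 / 3 ≤ ∫ t in a..b, U t := by
    obtain ⟨W, hWdef⟩ : ∃ W : ℝ → ℝ, W = fun t => U t - M * (t - a) ^ 2 := ⟨_, rfl⟩
    have hW : ∀ t, HasDerivAt W (u t - 2 * M * (t - a)) t := by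
      intro t
      rw [hWdef]
      have h2 : HasDerivAt (fun t : ℝ => M * (t - a) ^ 2) (2 * M * (t - a)) t := by
        have := (((hasDerivAt_id t).sub_const a).pow 2).const_mul M
        refine this.congr_deriv ?_
        simp
        ring
      exact (hU t).sub h2
    have hWdiff : Differentiable ℝ W := fun t => (hW t).differentiableAt
    have hWanti : Antitone (deriv W) := by
      have hWderiv : deriv W = fun t => u t - 2 * M * (t - a) := funext fun t => (hW t).deriv
      rw [hWderiv]
      intro s t hst
      have := hlip hst
      simp only
      nlinarith
    have hconc : ConcaveOn ℝ univ W := Antitone.concaveOn_univ_of_deriv hWdiff hWanti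
    have hWa : 0 ≤ W a := by
      rw [hWdef]
      simp only [sub_self]
      have := hUnn a hxa
      norm_num
      linarith
    have hWb : 0 ≤ W b := by
      have hlow := hUlow b (le_trans hxa hab) hby
      rw [hyb] at hlow
      rw [hWdef]
      simp only [hba]
      nlinarith [hΔK]
    have hpoint : ∀ t ∈ Icc a b, M * a^2 + (-(2*M*a)) * t + M * t^2 ≤ U t := by
      intro t ht
      have hseg : t ∈ segment ℝ a b := by rw [segment_eq_Icc hab]; exact ht
      have hmin0 := hconc.ge_on_segment (mem_univ a) (mem_univ b) hseg
      have hmin : 0 ≤ W t := le_trans (le_min hWa hWb) hmin0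
      rw [hWdef] at hmin
      simp only at hmin
      nlinarith [hmin]
    have hmono2 : ∫ t in a..b, (M * a^2 + (-(2*M*a)) * t + M * t^2) ≤ ∫ t in a..b, U t :=
      integral_mono_on hab ((pftc_cont _ _ _).intervalIntegrable _ _)
        (hUc.intervalIntegrable _ _) hpoint
    rw [poly_ftc] at hmono2
    have e : M * a ^ 2 * b + -(2 * M * a) * b ^ 2 / 2 + M * b ^ 3 / 3 -
        (M * a ^ 2 * a + -(2 * M * a) * a ^ 2 / 2 + M * a ^ 3 / 3) = M * h ^ 3 / 3 := by
      rw [← hba]; ring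
    linarith [hmono2, e.symm.le]
  -- piece 3
  have hP3 : S * K - Δ * K ^ 2 / 2 ≤ ∫ t in b..y, U t := by
    have hmono3 : ∫ t in b..y, ((S - Δ*y) + Δ * t + 0*t^2) ≤ ∫ t in b..y, U t := by
      refine integral_mono_on hby ((pftc_cont _ _ _).intervalIntegrable _ _)
        (hUc.intervalIntegrable _ _) (fun t ht => ?_)
      have := hUlow t (le_trans (le_trans hxa hab) ht.1) ht.2
      nlinarith
    rw [poly_ftc] at hmono3
    have e : (S - Δ * y) * y + Δ * y ^ 2 / 2 + 0 * y ^ 3 / 3 -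
        ((S - Δ * y) * b + Δ * b ^ 2 / 2 + 0 * b ^ 3 / 3) = S * K - Δ * K ^ 2 / 2 := by
      rw [← hyb]; ring
    linarith [hmono3]
  -- combine
  have hsplitA : (∫ t in x..a, U t) + (∫ t in a..b, U t) = ∫ t in x..b, U t :=
    integral_add_adjacent_intervals (hUc.intervalIntegrable _ _) (hUc.intervalIntegrable _ _)
  have hsplitB : (∫ t in x..b, U t) + (∫ t in b..y, U t) = ∫ t in x..y, U t :=
    integral_add_adjacent_intervals (hUc.intervalIntegrable _ _) (hUc.intervalIntegrable _ _)
  have hT : M * h ^ 3 / 3 + (S * K - Δ * K ^ 2 / 2) ≤ ∫ t in x..y, (y - t) * u t := by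
    rw [hTU]
    linarith
  have hKval : K = (S - M * h ^ 2) / (2 * M * h) := by
    rw [← hΔh, eq_div_iff (ne_of_gt hpos), mul_comm]
    exact hΔK
  have halg : S ^ 2 / (2 * Δ) + Δ ^ 3 / (96 * M ^ 2) =
      M * h ^ 3 / 3 + (S * K - Δ * K ^ 2 / 2) := by
    rw [hKval, hΔh]
    field_simp
    ring
  linarith [hT, halg]

lemma lemA (M : ℝ) (hM : 0 < M) (f f' f'' : ℝ → ℝ)
    (hf' : ∀ x, HasDerivAt f (f' x) x)
    (hf'' : ∀ x, HasDerivAt f' (f'' x) x)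
    (hLip : ∀ x y, |f'' x - f'' y| ≤ M * |x - y|)
    (x y : ℝ) (hxy : x < y) (hlt : |f'' x - f'' y| < M * |x - y|) :
    f y - f x - f' x * (y - x) - f'' x / 2 * (y - x) ^ 2 ≥
      -(M / 6) * |y - x| ^ 3 +
        (f' y - f' x - f'' x * (y - x) + (M / 2) * (y - x) * |y - x|) ^ 2 /
          (2 * (f'' y - f'' x + M * |y - x|)) +
        (f'' y - f'' x + M * |y - x|) ^ 3 / (96 * M ^ 2) := by
  have hyx : (0:ℝ) < y - x := by linarith
  rw [abs_sub_comm x y, abs_of_pos hyx] at hlt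
  have hlt2 := abs_lt.mp hlt
  have hf''cont : Continuous f'' := by
    have hL : LipschitzWith (Real.toNNReal M) f'' := by
      apply LipschitzWith.of_dist_le_mul
      intro a b
      rw [Real.dist_eq, Real.dist_eq, Real.coe_toNNReal M hM.le]
      exact hLip a b
    exact hL.continuous
  have hf'cont : Continuous f' :=
    (Differentiable.continuous fun t => (hf'' t).differentiableAt)
  have hucont : Continuous fun t => f'' t - f'' x + M * (t - x) := by
    exact (hf''cont.sub continuous_const).add
      (continuous_const.mul (continuous_id.sub continuous_const))
  have hmono : ∀ ⦃s t : ℝ⦄, s ≤ t →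
      f'' s - f'' x + M * (s - x) ≤ f'' t - f'' x + M * (t - x) := by
    intro s t hst
    have h1 := hLip s t
    rw [abs_sub_comm s t, abs_of_nonneg (by linarith : (0:ℝ) ≤ t - s)] at h1
    have := (abs_le.mp h1).2
    linarith
  have hlip : ∀ ⦃s t : ℝ⦄, s ≤ t →
      (f'' t - f'' x + M * (t - x)) - (f'' s - f'' x + M * (s - x)) ≤ 2 * M * (t - s) := by
    intro s t hst
    have h1 := hLip s t
    rw [abs_sub_comm s t, abs_of_nonneg (by linarith : (0:ℝ) ≤ t - s)] at h1
    have := (abs_le.mp h1).1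
    linarith
  have h0 := core M hM (fun t => f'' t - f'' x + M * (t - x)) hucont
    (fun s t hst => hmono hst) (fun s t hst => hlip hst) x y hxy
    (by ring) (by linarith) (by linarith)
  -- compute the two integrals
  have SI : ∫ t in x..y, (f'' t - f'' x + M * (t - x))
      = f' y - f' x - f'' x * (y - x) + M / 2 * (y - x) * (y - x) := by
    have hA : ∀ t, HasDerivAt (fun t => f' t - f'' x * t + M * (t - x) ^ 2 / 2)
        (f'' t - f'' x + M * (t - x)) t := by
      intro t
      have h1 := hf'' t
      have h2 := (hasDerivAt_id t).const_mul (f'' x)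
      have h3 := ((((hasDerivAt_id t).sub_const x).pow 2).const_mul M).div_const 2
      refine ((h1.sub h2).add h3).congr_deriv ?_
      simp
      ring
    rw [ftc_aux hA hucont x y]
    ring
  have hwcont : Continuous fun t => (y - t) * (f'' t - f'' x + M * (t - x)) :=
    (continuous_const.sub continuous_id).mul hucont
  have TI : ∫ t in x..y, (y - t) * (f'' t - f'' x + M * (t - x))
      = (f y - f x - f' x * (y - x)) - f'' x * (y - x) ^ 2 / 2 + M * (y - x) ^ 3 / 6 := by
    have hB : ∀ t, HasDerivAt
        (fun t => f t + f' t * (y - t) + f'' x * (y - t) ^ 2 / 2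
          + M * (-(t ^ 3) / 3 + (x + y) * t ^ 2 / 2 - x * y * t))
        ((y - t) * (f'' t - f'' x + M * (t - x))) t := by
      intro t
      have h1 := hf' t
      have h2 := (hf'' t).mul ((hasDerivAt_id t).const_sub y)
      have h3 := ((((hasDerivAt_id t).const_sub y).pow 2).const_mul (f'' x)).div_const 2
      have h4a := (hasDerivAt_pow 3 t).neg.div_const 3
      have h4b := ((hasDerivAt_pow 2 t).const_mul (x + y)).div_const 2
      have h4c := (hasDerivAt_id t).const_mul (x * y)
      have h4 := ((h4a.add h4b).sub h4c).const_mul M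
      refine (((h1.add h2).add h3).add h4).congr_deriv ?_
      simp
      ring
    rw [ftc_aux hB (by fun_prop) x y]
    ring
  rw [SI, TI] at h0
  rw [abs_of_pos hyx]
  linarith [h0]

/-- Necessity direction of the exact interpolation condition with function values
for Hessian M-Lipschitz univariate functions. -/
theorem hessian_lipschitz_interp_lower (M : ℝ) (hM : 0 < M) (f f' f'' : ℝ → ℝ)
    (hf' : ∀ x, HasDerivAt f (f' x) x)
    (hf'' : ∀ x, HasDerivAt f' (f'' x) x)
    (hLip : ∀ x y, |f'' x - f'' y| ≤ M * |x - y|) :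
    ∀ x y : ℝ, |f'' x - f'' y| < M * |x - y| →
      f y - f x - f' x * (y - x) - f'' x / 2 * (y - x) ^ 2 ≥
        -(M / 6) * |y - x| ^ 3 +
          (f' y - f' x - f'' x * (y - x) + (M / 2) * (y - x) * |y - x|) ^ 2 /
            (2 * (f'' y - f'' x + M * |y - x|)) +
          (f'' y - f'' x + M * |y - x|) ^ 3 / (96 * M ^ 2) := by
  intro x y hlt
  rcases lt_trichotomy x y with hxy | hxy | hxy
  · exact lemA M hM f f' f'' hf' hf'' hLip x y hxy hlt
  · exfalso
    subst hxy
    simp at hlt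
  · -- y < x : reflect
    have hg' : ∀ z : ℝ, HasDerivAt (fun t => f (-t)) (-f' (-z)) z := by
      intro z
      have := (hf' (-z)).comp z (hasDerivAt_neg z)
      refine this.congr_deriv ?_
      ring
    have hg'' : ∀ z : ℝ, HasDerivAt (fun t => -f' (-t)) (f'' (-z)) z := by
      intro z
      have := ((hf'' (-z)).comp z (hasDerivAt_neg z)).neg
      refine this.congr_deriv ?_
      ring
    have hgLip : ∀ a b : ℝ, |f'' (-a) - f'' (-b)| ≤ M * |a - b| := by
      intro a b
      have := hLip (-a) (-b)
      have e : |(-a) - (-b)| = |a - b| := by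
        rw [abs_sub_comm]
        congr 1
        ring
      rwa [e] at this
    have hlt' : |f'' (-(-x)) - f'' (-(-y))| < M * |(-x) - (-y)| := by
      rw [neg_neg, neg_neg]
      have e : |(-x) - (-y)| = |x - y| := by rw [abs_sub_comm]; congr 1; ring
      rwa [e]
    have hI := lemA M hM (fun t => f (-t)) (fun t => -f' (-t)) (fun t => f'' (-t))
      hg' hg'' hgLip (-x) (-y) (by linarith) hlt'
    simp only [neg_neg] at hI
    have e1 : (-y:ℝ) - -x = x - y := by ring
    rw [e1, abs_of_pos (by linarith : (0:ℝ) < x - y)] at hI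
    rw [show |y - x| = x - y by rw [abs_sub_comm]; exact abs_of_pos (by linarith)]
    have e2 : (-(f' y) - -(f' x) - f'' x * (x - y) + M / 2 * (x - y) * (x - y)) ^ 2 /
          (2 * (f'' y - f'' x + M * (x - y))) =
        (f' y - f' x - f'' x * (y - x) + M / 2 * (y - x) * (x - y)) ^ 2 /
          (2 * (f'' y - f'' x + M * (x - y))) := by
      ring
    rw [e2] at hI
    linarith [hI]
end

section
/- Let M, μ > 0, and let f : ℝ → ℝ be twice differentiable with f''(x) ≥ μ for all x, and M-Lipschitz second derivative. Then for all x, y ∈ ℝ with y - x ≥ (f''(x) + f''(y) - 2μ)/M, we have f'(y) - f'(x) ≥ μ(y-x) + ((f''(x) - μ)² + (f''(y) - μ)²)/(2M). -/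
/-- Monotonicity from a nonnegative derivative on the interior of an interval. -/
lemma mono_of_deriv_nonneg_aux (g g' : ℝ → ℝ) (hg : ∀ t, HasDerivAt g (g' t) t)
    (p q : ℝ) (h : ∀ t ∈ Set.Ioo p q, 0 ≤ g' t) : MonotoneOn g (Set.Icc p q) := by
  apply monotoneOn_of_deriv_nonneg (convex_Icc p q)
  · exact fun t _ => (hg t).continuousAt.continuousWithinAt
  · exact fun t _ => ((hg t).differentiableAt).differentiableWithinAt
  · intro t ht
    rw [interior_Icc] at ht
    rw [(hg t).deriv]
    exact h t ht

/-- Interpolation-type inequality for strongly convex functions with M-Lipschitz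
second derivative. -/
theorem strongly_convex_hessian_lipschitz_bound (M μ : ℝ) (hM : 0 < M) (hμ : 0 < μ)
    (f f' f'' : ℝ → ℝ)
    (hf' : ∀ x, HasDerivAt f (f' x) x)
    (hf'' : ∀ x, HasDerivAt f' (f'' x) x)
    (hsc : ∀ x, f'' x ≥ μ)
    (hLip : ∀ x y, |f'' x - f'' y| ≤ M * |x - y|) :
    ∀ x y : ℝ, y - x ≥ (f'' x + f'' y - 2 * μ) / M →
      f' y - f' x ≥ μ * (y - x) + ((f'' x - μ) ^ 2 + (f'' y - μ) ^ 2) / (2 * M) := by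
  intro x y hxy
  have hMne : M ≠ 0 := ne_of_gt hM
  set d1 : ℝ := (f'' x - μ) / M with hd1def
  set d2 : ℝ := (f'' y - μ) / M with hd2def
  have hd1 : M * d1 = f'' x - μ := by rw [hd1def]; field_simp
  have hd2 : M * d2 = f'' y - μ := by rw [hd2def]; field_simp
  have hd1nn : 0 ≤ d1 := div_nonneg (by linarith [hsc x]) hM.le
  have hd2nn : 0 ≤ d2 := div_nonneg (by linarith [hsc y]) hM.le
  set a : ℝ := x + d1 with hadef
  set b : ℝ := y - d2 with hbdef
  have hxa : x ≤ a := by simp only [hadef]; linarith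
  have hby : b ≤ y := by simp only [hbdef]; linarith
  have hab : a ≤ b := by
    have h1 : d1 + d2 = (f'' x + f'' y - 2 * μ) / M := by
      rw [hd1def, hd2def]; ring
    have h2 : d1 + d2 ≤ y - x := by rw [h1]; exact hxy
    simp only [hadef, hbdef]; linarith
  -- Piece 1 on [x, a]
  have hg : ∀ t, HasDerivAt (fun t => f' t - (f'' x * (t - x) - M * (t - x) ^ 2 / 2))
      (f'' t - (f'' x - M * (t - x))) t := by
    intro t
    have h1 : HasDerivAt (fun t : ℝ => t - x) 1 t := (hasDerivAt_id t).sub_const x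
    have h2 := (h1.const_mul (f'' x)).sub (((h1.pow 2).const_mul M).div_const 2)
    have h3 := (hf'' t).sub h2
    exact h3.congr_deriv (by push_cast; ring)
  have I1 : f' a - f' x ≥ f'' x * (a - x) - M * (a - x) ^ 2 / 2 := by
    have hm := mono_of_deriv_nonneg_aux _ _ hg x a (by
      intro t ht
      have hl := hLip x t
      have habs : |x - t| = t - x := by
        rw [abs_sub_comm, abs_of_nonneg (by linarith [ht.1])]
      rw [habs] at hl
      have := le_abs_self (f'' x - f'' t)
      linarith)
    have := hm (Set.left_mem_Icc.mpr hxa) (Set.right_mem_Icc.mpr hxa) hxa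
    simp only [sub_self] at this
    linarith [this]
  -- Piece 2 on [a, b]
  have hh : ∀ t, HasDerivAt (fun t => f' t - μ * t) (f'' t - μ) t := by
    intro t
    exact (hf'' t).sub (((hasDerivAt_id t).const_mul μ).congr_deriv (by ring))
  have I2 : f' b - f' a ≥ μ * (b - a) := by
    have hm := mono_of_deriv_nonneg_aux _ _ hh a b (by
      intro t _; linarith [hsc t])
    have := hm (Set.left_mem_Icc.mpr hab) (Set.right_mem_Icc.mpr hab) hab
    simp only at this
    linarith [this]
  -- Piece 3 on [b, y]
  have hk : ∀ t, HasDerivAt (fun t => f' t - (f'' y * (t - y) + M * (t - y) ^ 2 / 2))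
      (f'' t - (f'' y + M * (t - y))) t := by
    intro t
    have h1 : HasDerivAt (fun t : ℝ => t - y) 1 t := (hasDerivAt_id t).sub_const y
    have h2 := (h1.const_mul (f'' y)).add (((h1.pow 2).const_mul M).div_const 2)
    have h3 := (hf'' t).sub h2
    exact h3.congr_deriv (by push_cast; ring)
  have I3 : f' y - f' b ≥ f'' y * (y - b) - M * (y - b) ^ 2 / 2 := by
    have hm := mono_of_deriv_nonneg_aux _ _ hk b y (by
      intro t ht
      have hl := hLip y t
      have habs : |y - t| = y - t := abs_of_nonneg (by linarith [ht.2])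
      rw [habs] at hl
      have := le_abs_self (f'' y - f'' t)
      linarith)
    have := hm (Set.left_mem_Icc.mpr hby) (Set.right_mem_Icc.mpr hby) hby
    simp only [sub_self] at this
    linarith [this]
  -- Combine
  have hax : a - x = d1 := by simp [hadef]
  have hyb : y - b = d2 := by simp [hbdef]
  rw [hax] at I1
  rw [hyb] at I3
  have hrhs : ((f'' x - μ) ^ 2 + (f'' y - μ) ^ 2) / (2 * M)
      = M * d1 ^ 2 / 2 + M * d2 ^ 2 / 2 := by
    rw [← hd1, ← hd2]; field_simp
  rw [hrhs]
  have hfx : f'' x = μ + M * d1 := by linarith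
  have hfy : f'' y = μ + M * d2 := by linarith
  rw [hfx] at I1
  rw [hfy] at I3
  have hba : b - a = y - x - d1 - d2 := by simp [hadef, hbdef]; ring
  rw [hba] at I2
  nlinarith [I1, I2, I3]
end

section
/- Let M > 0 and f : ℝ → ℝ be three times differentiable with f'' ≥ 0 and |f'''(x)| ≤ M f''(x) for all x. Then for all x, y ∈ ℝ, f'(y) - f'(x) - f''(x)(y-x) ≤ (1/M) f''(x)·(exp(M|y-x|) - M|y-x| - 1) - (1/M)·(√(f''(y)) - √(f''(x)·exp(M(y-x))))². -/
lemma aux_sinh (t : ℝ) (ht : 0 ≤ t) : 2 * t ≤ Real.exp t - Real.exp (-t) := by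
  have hmono : Monotone (fun t => Real.exp t - Real.exp (-t) - 2 * t) := by
    have hd : ∀ u : ℝ, HasDerivAt (fun t => Real.exp t - Real.exp (-t) - 2 * t)
        (Real.exp u - Real.exp (-u) * (-1) - 2) u := by
      intro u
      have := ((Real.hasDerivAt_exp u).sub (((hasDerivAt_id u).neg).exp)).sub
        ((hasDerivAt_id u).const_mul 2)
      exact this.congr_deriv (by simp)
    refine monotone_of_deriv_nonneg (fun u => (hd u).differentiableAt) (fun u => ?_)
    rw [(hd u).deriv]
    have hprod : Real.exp u * Real.exp (-u) = 1 := by rw [← Real.exp_add]; simp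
    nlinarith [mul_nonneg (mul_self_nonneg (Real.exp u - 1)) (Real.exp_pos (-u)).le, hprod]
  have := hmono ht
  simp only [Real.exp_zero, neg_zero, mul_zero, sub_zero] at this
  linarith

lemma qsc_alg (M gx c b G E : ℝ) (hM : 0 < M) (hG : 0 < G) (hb : G * G = b) :
    b + c / M - 2 * gx / M * (c / (2 * G) * E + G * (E * (M / 2)))
    = (G - gx * E) * (c + M * b) / (M * G) := by
  subst hb
  field_simp
  ring

/-- Strengthened descent-type bound for quasi-self-concordant functions. -/
theorem qsc_improved_bound (M : ℝ) (hM : 0 < M) (f f' f'' f''' : ℝ → ℝ)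
    (hf' : ∀ x, HasDerivAt f (f' x) x)
    (hf'' : ∀ x, HasDerivAt f' (f'' x) x)
    (hf''' : ∀ x, HasDerivAt f'' (f''' x) x)
    (hconv : ∀ x, 0 ≤ f'' x)
    (hqsc : ∀ x, |f''' x| ≤ M * f'' x) :
    ∀ x y : ℝ,
      f' y - f' x - f'' x * (y - x) ≤
        (1 / M) * f'' x * (Real.exp (M * |y - x|) - M * |y - x| - 1) -
        (1 / M) * (Real.sqrt (f'' y) - Real.sqrt (f'' x * Real.exp (M * (y - x)))) ^ 2 := by
  -- the function t ↦ f'' t * exp (-(M t)) is antitone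
  have hφd : ∀ t : ℝ, HasDerivAt (fun t => f'' t * Real.exp (-(M * t)))
      ((f''' t - M * f'' t) * Real.exp (-(M * t))) t := by
    intro t
    have h1 : HasDerivAt (fun t : ℝ => Real.exp (-(M * t))) (Real.exp (-(M * t)) * (-M)) t := by
      have h0 : HasDerivAt (fun t : ℝ => -(M * t)) (-M) t := by
        exact (((hasDerivAt_id t).const_mul M).neg).congr_deriv (by simp)
      exact h0.exp
    have := (hf''' t).mul h1
    exact this.congr_deriv (by ring)
  have hφ : Antitone (fun t => f'' t * Real.exp (-(M * t))) := by
    refine antitone_of_deriv_nonpos (fun t => (hφd t).differentiableAt) (fun t => ?_)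
    rw [(hφd t).deriv]
    have h1 : f''' t - M * f'' t ≤ 0 := by linarith [(abs_le.1 (hqsc t)).2]
    exact mul_nonpos_of_nonpos_of_nonneg h1 (Real.exp_pos _).le
  -- the function t ↦ f'' t * exp (M t) is monotone
  have hψd : ∀ t : ℝ, HasDerivAt (fun t => f'' t * Real.exp (M * t))
      ((f''' t + M * f'' t) * Real.exp (M * t)) t := by
    intro t
    have h1 : HasDerivAt (fun t : ℝ => Real.exp (M * t)) (Real.exp (M * t) * M) t := by
      have h0 : HasDerivAt (fun t : ℝ => M * t) M t := by
        simpa using (hasDerivAt_id t).const_mul M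
      exact h0.exp
    have := (hf''' t).mul h1
    exact this.congr_deriv (by ring)
  have hψ : Monotone (fun t => f'' t * Real.exp (M * t)) := by
    refine monotone_of_deriv_nonneg (fun t => (hψd t).differentiableAt) (fun t => ?_)
    rw [(hψd t).deriv]
    have h1 : 0 ≤ f''' t + M * f'' t := by linarith [(abs_le.1 (hqsc t)).1]
    exact mul_nonneg h1 (Real.exp_pos _).le
  -- Gronwall upper bound
  have gron : ∀ v u : ℝ, v ≤ u → f'' u ≤ f'' v * Real.exp (M * (u - v)) := by
    intro v u hvu
    have h := hφ hvu
    have h3 := mul_le_mul_of_nonneg_right h (Real.exp_pos (M * u)).le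
    calc f'' u = f'' u * Real.exp (-(M * u)) * Real.exp (M * u) := by
          rw [mul_assoc, ← Real.exp_add]; simp
      _ ≤ f'' v * Real.exp (-(M * v)) * Real.exp (M * u) := h3
      _ = f'' v * Real.exp (M * (u - v)) := by rw [mul_assoc, ← Real.exp_add]; ring_nf
  by_cases hz : ∃ t, f'' t = 0
  · -- degenerate case: f'' ≡ 0
    obtain ⟨t0, ht0⟩ := hz
    have hall : ∀ t, f'' t = 0 := by
      intro t
      rcases le_total t t0 with h | h
      · have h2 := hψ h
        simp only [ht0, zero_mul] at h2
        nlinarith [Real.exp_pos (M * t), hconv t]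
      · have h2 := hφ h
        simp only [ht0, zero_mul] at h2
        nlinarith [Real.exp_pos (-(M * t)), hconv t]
    intro x y
    have hconst : f' y = f' x :=
      is_const_of_deriv_eq_zero (fun t => (hf'' t).differentiableAt)
        (fun t => by rw [(hf'' t).deriv]; exact hall t) y x
    simp [hall, hconst]
  · -- positive case
    push_neg at hz
    have hpos : ∀ t, 0 < f'' t := fun t => (hconv t).lt_of_ne (fun h => hz t h.symm)
    have hgpos : ∀ t, 0 < Real.sqrt (f'' t) := fun t => Real.sqrt_pos.2 (hpos t)
    have hg2 : ∀ t, Real.sqrt (f'' t) * Real.sqrt (f'' t) = f'' t :=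
      fun t => Real.mul_self_sqrt (hconv t)
    have hgd : ∀ t, HasDerivAt (fun t => Real.sqrt (f'' t))
        (f''' t / (2 * Real.sqrt (f'' t))) t :=
      fun t => (hf''' t).sqrt (hpos t).ne'
    intro x y
    have hE2 : ∀ u : ℝ, Real.exp (M * (u - x) / 2) * Real.exp (M * (u - x) / 2)
        = Real.exp (M * (u - x)) := by
      intro u; rw [← Real.exp_add]; ring_nf
    have hEd : ∀ u : ℝ, HasDerivAt (fun u => Real.exp (M * (u - x) / 2))
        (Real.exp (M * (u - x) / 2) * (M / 2)) u := by
      intro u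
      have h0 : HasDerivAt (fun u : ℝ => M * (u - x) / 2) (M / 2) u := by
        simpa using (((hasDerivAt_id u).sub_const x).const_mul M).div_const 2
      exact h0.exp
    -- the auxiliary function h and its derivative in closed form
    have hhd : ∀ u : ℝ, HasDerivAt
        (fun u => f' u + f'' u / M -
          (2 * Real.sqrt (f'' x) / M) * (Real.sqrt (f'' u) * Real.exp (M * (u - x) / 2)))
        ((Real.sqrt (f'' u) - Real.sqrt (f'' x) * Real.exp (M * (u - x) / 2)) *
          (f''' u + M * f'' u) / (M * Real.sqrt (f'' u))) u := by
      intro u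
      have hnat := ((hf'' u).add ((hf''' u).div_const M)).sub
        (((hgd u).mul (hEd u)).const_mul (2 * Real.sqrt (f'' x) / M))
      rwa [qsc_alg M (Real.sqrt (f'' x)) (f''' u) (f'' u) (Real.sqrt (f'' u))
        (Real.exp (M * (u - x) / 2)) hM (hgpos u) (hg2 u)] at hnat
    -- comparison of sqrt f'' with exponential envelope
    have hsqexp : ∀ u : ℝ, Real.sqrt (Real.exp (M * (u - x)))
        = Real.exp (M * (u - x) / 2) := by
      intro u; rw [← hE2 u, Real.sqrt_mul_self (Real.exp_pos _).le]
    have hup : ∀ u, x ≤ u →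
        Real.sqrt (f'' u) ≤ Real.sqrt (f'' x) * Real.exp (M * (u - x) / 2) := by
      intro u hu
      have h1 := gron x u hu
      calc Real.sqrt (f'' u) ≤ Real.sqrt (f'' x * Real.exp (M * (u - x))) :=
            Real.sqrt_le_sqrt h1
        _ = Real.sqrt (f'' x) * Real.exp (M * (u - x) / 2) := by
            rw [Real.sqrt_mul (hconv x), hsqexp]
    have hlo : ∀ u, u ≤ x →
        Real.sqrt (f'' x) * Real.exp (M * (u - x) / 2) ≤ Real.sqrt (f'' u) := by
      intro u hu
      have h1 := gron u x hu
      have h2 : f'' x * Real.exp (M * (u - x)) ≤ f'' u := by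
        have h3 := mul_le_mul_of_nonneg_right h1 (Real.exp_pos (M * (u - x))).le
        calc f'' x * Real.exp (M * (u - x)) ≤ f'' u * Real.exp (M * (x - u)) *
              Real.exp (M * (u - x)) := h3
          _ = f'' u := by rw [mul_assoc, ← Real.exp_add]; ring_nf; rw [Real.exp_zero, mul_one]
      calc Real.sqrt (f'' x) * Real.exp (M * (u - x) / 2)
            = Real.sqrt (f'' x * Real.exp (M * (u - x))) := by
              rw [Real.sqrt_mul (hconv x), hsqexp]
        _ ≤ Real.sqrt (f'' u) := Real.sqrt_le_sqrt h2
    have hqsc' : ∀ u, 0 ≤ f''' u + M * f'' u := fun u => by linarith [(abs_le.1 (hqsc u)).1]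
    -- monotonicity of h on both sides of x
    have hanti : AntitoneOn
        (fun u => f' u + f'' u / M -
          (2 * Real.sqrt (f'' x) / M) * (Real.sqrt (f'' u) * Real.exp (M * (u - x) / 2)))
        (Set.Ici x) := by
      refine antitoneOn_of_deriv_nonpos (convex_Ici x)
        (fun u _ => (hhd u).differentiableAt.continuousAt.continuousWithinAt)
        (fun u _ => (hhd u).differentiableAt.differentiableWithinAt) (fun u hu => ?_)
      rw [interior_Ici] at hu
      rw [(hhd u).deriv]
      apply div_nonpos_of_nonpos_of_nonneg
      · exact mul_nonpos_of_nonpos_of_nonneg (sub_nonpos.2 (hup u hu.le)) (hqsc' u)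
      · exact (mul_pos hM (hgpos u)).le
    have hmono : MonotoneOn
        (fun u => f' u + f'' u / M -
          (2 * Real.sqrt (f'' x) / M) * (Real.sqrt (f'' u) * Real.exp (M * (u - x) / 2)))
        (Set.Iic x) := by
      refine monotoneOn_of_deriv_nonneg (convex_Iic x)
        (fun u _ => (hhd u).differentiableAt.continuousAt.continuousWithinAt)
        (fun u _ => (hhd u).differentiableAt.differentiableWithinAt) (fun u hu => ?_)
      rw [interior_Iic] at hu
      rw [(hhd u).deriv]
      apply div_nonneg
      · exact mul_nonneg (sub_nonneg.2 (hlo u hu.le)) (hqsc' u)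
      · exact (mul_pos hM (hgpos u)).le
    have hkey : f' y + f'' y / M -
          (2 * Real.sqrt (f'' x) / M) * (Real.sqrt (f'' y) * Real.exp (M * (y - x) / 2))
        ≤ f' x + f'' x / M -
          (2 * Real.sqrt (f'' x) / M) * (Real.sqrt (f'' x) * Real.exp (M * (x - x) / 2)) := by
      rcases le_total x y with hxy | hxy
      · exact hanti Set.self_mem_Ici (Set.mem_Ici.2 hxy) hxy
      · exact hmono (Set.mem_Iic.2 hxy) Set.self_mem_Iic hxy
    have hExx : Real.exp (M * (x - x) / 2) = 1 := by simp
    rw [hExx, mul_one] at hkey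
    rw [show 2 * Real.sqrt (f'' x) / M * Real.sqrt (f'' x)
        = 2 * (Real.sqrt (f'' x) * Real.sqrt (f'' x)) / M from by ring, hg2 x] at hkey
    -- final assembly
    have hfin : M * (|y - x| - (y - x)) ≤ Real.exp (M * |y - x|) - Real.exp (M * (y - x)) := by
      rcases abs_cases (y - x) with ⟨h1, _⟩ | ⟨h1, _⟩
      · rw [h1]; simp
      · rw [h1]
        have h2 := aux_sinh (M * -(y - x)) (by nlinarith)
        have h3 : -(M * -(y - x)) = M * (y - x) := by ring
        rw [h3] at h2
        linarith
    have hmain : 0 ≤ f'' x * (Real.exp (M * |y - x|) - Real.exp (M * (y - x))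
        - M * (|y - x| - (y - x))) := mul_nonneg (hconv x) (by linarith)
    rw [Real.sqrt_mul (hconv x), hsqexp y]
    have e1 : 1 / M * f'' x * (Real.exp (M * |y - x|) - M * |y - x| - 1) -
        1 / M * (Real.sqrt (f'' y) - Real.sqrt (f'' x) * Real.exp (M * (y - x) / 2)) ^ 2
        = ((2 * Real.sqrt (f'' x) / M) * (Real.sqrt (f'' y) * Real.exp (M * (y - x) / 2))
            - f'' x / M - f'' y / M - f'' x * (y - x))
          + 1 / M * (f'' x * (Real.exp (M * |y - x|) - Real.exp (M * (y - x))
            - M * (|y - x| - (y - x)))) := by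
      rw [← hE2 y, ← hg2 x, ← hg2 y]
      field_simp [hM.ne']
      simp only [Real.sqrt_sq, Real.sqrt_nonneg]
      ring
    rw [e1]
    have h2 : 0 ≤ 1 / M * (f'' x * (Real.exp (M * |y - x|) - Real.exp (M * (y - x))
        - M * (|y - x| - (y - x)))) := mul_nonneg (by positivity) hmain
    ring_nf at hkey h2 ⊢
    linarith [hkey, h2]
end

section
/- Let M > 0 and f : ℝ → ℝ be three times differentiable with f''(x) > 0 everywhere and |f'''(x)| ≤ 2M f''(x)^(3/2) (i.e., f is M-self-concordant). Then for all x < y with f''(x)^(-1/2) + f''(y)^(-1/2) > -M(y-x), we have f'(y) - f'(x) ≥ 1/(M·f''(x)^(-1/2)) + 1/(M·f''(y)^(-1/2)) - 4/(M(f''(x)^(-1/2) + f''(y)^(-1/2) + M(y-x))). -/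
lemma mono_aux' {g g' : ℝ → ℝ} {p q : ℝ} (hpq : p ≤ q)
    (hg : ∀ t ∈ Set.Icc p q, HasDerivAt g (g' t) t)
    (h0 : ∀ t ∈ Set.Icc p q, 0 ≤ g' t) : g p ≤ g q := by
  have hmono := monotoneOn_of_deriv_nonneg (convex_Icc p q)
    (fun t ht => (hg t ht).continuousAt.continuousWithinAt)
    (fun t ht => (hg t (interior_subset ht)).differentiableAt.differentiableWithinAt)
    (fun t ht => by rw [(hg t (interior_subset ht)).deriv]; exact h0 t (interior_subset ht))
  exact hmono (Set.left_mem_Icc.2 hpq) (Set.right_mem_Icc.2 hpq) hpq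


/-- Necessity direction of the interpolation condition for self-concordant
univariate functions. -/
theorem sc_interp_necessary (M : ℝ) (hM : 0 < M) (f f' f'' f''' : ℝ → ℝ)
    (hf' : ∀ x, HasDerivAt f (f' x) x)
    (hf'' : ∀ x, HasDerivAt f' (f'' x) x)
    (hf''' : ∀ x, HasDerivAt f'' (f''' x) x)
    (hpos : ∀ x, 0 < f'' x)
    (hsc : ∀ x, |f''' x| ≤ 2 * M * f'' x ^ ((3 : ℝ) / 2)) :
    ∀ x y : ℝ, x < y →
      f'' x ^ (-(1 : ℝ) / 2) + f'' y ^ (-(1 : ℝ) / 2) > -M * (y - x) →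
      f' y - f' x ≥
        1 / (M * f'' x ^ (-(1 : ℝ) / 2)) + 1 / (M * f'' y ^ (-(1 : ℝ) / 2)) -
          4 / (M * (f'' x ^ (-(1 : ℝ) / 2) + f'' y ^ (-(1 : ℝ) / 2) + M * (y - x))) := by
  intro x y hxy _hyp
  set u : ℝ → ℝ := fun t => f'' t ^ (-(1 : ℝ) / 2) with hu
  set u' : ℝ → ℝ := fun t => (-(1 : ℝ) / 2 * f'' t ^ (-(1 : ℝ) / 2 - 1)) * f''' t with hu'
  have hupos : ∀ t, 0 < u t := fun t => Real.rpow_pos_of_pos (hpos t) _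
  have hud : ∀ t, HasDerivAt u (u' t) t := by
    intro t
    have h1 : HasDerivAt (fun z : ℝ => z ^ (-(1 : ℝ) / 2))
        (-(1 : ℝ) / 2 * f'' t ^ (-(1 : ℝ) / 2 - 1)) (f'' t) :=
      Real.hasDerivAt_rpow_const (Or.inl (hpos t).ne')
    exact h1.comp t (hf''' t) |>.congr_deriv rfl
  have hubd : ∀ t, |u' t| ≤ M := by
    intro t
    have h32 : (0:ℝ) < f'' t ^ ((3:ℝ)/2) := Real.rpow_pos_of_pos (hpos t) _
    have hneg32 : (0:ℝ) < f'' t ^ (-(3:ℝ)/2) := Real.rpow_pos_of_pos (hpos t) _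
    have he : (-(1:ℝ)/2 - 1) = -(3:ℝ)/2 := by norm_num
    have habs : |u' t| = 1/2 * f'' t ^ (-(3:ℝ)/2) * |f''' t| := by
      rw [hu']
      rw [abs_mul, he, abs_mul, abs_of_pos hneg32]
      norm_num
    rw [habs]
    calc 1/2 * f'' t ^ (-(3:ℝ)/2) * |f''' t|
        ≤ 1/2 * f'' t ^ (-(3:ℝ)/2) * (2 * M * f'' t ^ ((3:ℝ)/2)) := by
          apply mul_le_mul_of_nonneg_left (hsc t); positivity
      _ = M * (f'' t ^ (-(3:ℝ)/2) * f'' t ^ ((3:ℝ)/2)) := by ring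
      _ = M := by
          rw [← Real.rpow_add (hpos t)]
          norm_num
  have lip1 : ∀ s t : ℝ, s ≤ t → u t ≤ u s + M * (t - s) := by
    intro s t hst
    have := mono_aux' (g := fun r => M * r - u r) (g' := fun r => M - u' r) hst
      (fun r _ => ((hasDerivAt_id r).const_mul M |>.sub (hud r)).congr_deriv (by ring))
      (fun r _ => by show 0 ≤ M - u' r; have := abs_le.1 (hubd r); linarith [this.2])
    linarith
  have lip2 : ∀ s t : ℝ, s ≤ t → u s ≤ u t + M * (t - s) := by
    intro s t hst
    have := mono_aux' (g := fun r => M * r + u r) (g' := fun r => M + u' r) hst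
      (fun r _ => ((hasDerivAt_id r).const_mul M |>.add (hud r)).congr_deriv (by ring))
      (fun r _ => by show 0 ≤ M + u' r; have := abs_le.1 (hubd r); linarith [this.1])
    linarith
  have hfu : ∀ t, f'' t = (u t ^ 2)⁻¹ := by
    intro t
    have h : u t ^ 2 = (f'' t)⁻¹ := by
      rw [hu]
      rw [← Real.rpow_natCast (f'' t ^ (-(1:ℝ)/2)) 2, ← Real.rpow_mul (hpos t).le]
      norm_num [Real.rpow_neg_one]
    rw [h, inv_inv]
  set a := u x with ha
  set b := u y with hb
  have hapos : 0 < a := hupos x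
  have hbpos : 0 < b := hupos y
  set s := (a + b + M * (y - x)) / 2 with hs
  have hspos : 0 < s := by
    rw [hs]
    have : 0 < y - x := by linarith
    positivity
  set c := x + (s - a) / M with hc
  have hdm : M * ((s - a) / M) = s - a := by field_simp
  have hca : a + M * (c - x) = s := by
    rw [hc]
    rw [show x + (s - a) / M - x = (s - a) / M by ring, hdm]
    ring
  have hcb : b + M * (y - c) = s := by
    rw [hc]
    rw [show y - (x + (s - a) / M) = (y - x) - (s - a) / M by ring, mul_sub, hdm, hs]
    ring
  have hxc : x ≤ c := by
    have h1 : a ≤ b + M * (y - x) := lip2 x y hxy.le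
    have h2 : 0 ≤ (s - a) / M := div_nonneg (by rw [hs]; linarith) hM.le
    rw [hc]; linarith
  have hcy : c ≤ y := by
    have h1 : b ≤ a + M * (y - x) := lip1 x y hxy.le
    have h2 : (s - a) / M ≤ y - x := by
      rw [div_le_iff₀ hM, hs]; nlinarith
    rw [hc]; linarith
  have key1 : f' x + (M * a)⁻¹ ≤ f' c + (M * s)⁻¹ := by
    have h := mono_aux' (g := fun t => f' t + (M * (a + M * (t - x)))⁻¹)
      (g' := fun t => f'' t + (-(M * M) / (M * (a + M * (t - x))) ^ 2)) hxc
      (fun t ht => by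
        have h3 : 0 < a + M * (t - x) := lt_of_lt_of_le (hupos t) (lip1 x t ht.1)
        have hne : M * (a + M * (t - x)) ≠ 0 := by positivity
        have hlin : HasDerivAt (fun r : ℝ => M * (a + M * (r - x))) (M * M) t := by
          simpa using ((((hasDerivAt_id t).sub_const x).const_mul M).const_add a).const_mul M
        have hinner : HasDerivAt (fun r : ℝ => (M * (a + M * (r - x)))⁻¹)
            (-(M * M) / (M * (a + M * (t - x))) ^ 2) t := hlin.inv hne
        exact (hf'' t).add hinner)
      (fun t ht => by
        show 0 ≤ f'' t + (-(M * M) / (M * (a + M * (t - x))) ^ 2)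
        have h1 : u t ≤ a + M * (t - x) := lip1 x t ht.1
        have h2 : 0 < u t := hupos t
        have h3 : 0 < a + M * (t - x) := lt_of_lt_of_le h2 h1
        have h4 : ((a + M * (t - x)) ^ 2)⁻¹ ≤ (u t ^ 2)⁻¹ := by gcongr
        have h5 : (M * M) / (M * (a + M * (t - x))) ^ 2 = ((a + M * (t - x)) ^ 2)⁻¹ := by
          field_simp
        rw [hfu t, neg_div, h5]
        linarith)
    rw [show a + M * (x - x) = a by ring, hca] at h
    exact h
  have key2 : f' c - (M * s)⁻¹ ≤ f' y - (M * b)⁻¹ := by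
    have h := mono_aux' (g := fun t => f' t - (M * (b + M * (y - t)))⁻¹)
      (g' := fun t => f'' t - (M * M) / (M * (b + M * (y - t))) ^ 2) hcy
      (fun t ht => by
        have h3 : 0 < b + M * (y - t) := lt_of_lt_of_le (hupos t) (lip2 t y ht.2)
        have hne : M * (b + M * (y - t)) ≠ 0 := by positivity
        have hlin : HasDerivAt (fun r : ℝ => M * (b + M * (y - r))) (-(M * M)) t := by
          have := ((((hasDerivAt_id t).const_sub y).const_mul M).const_add b).const_mul M
          simpa using this
        have hinner : HasDerivAt (fun r : ℝ => (M * (b + M * (y - r)))⁻¹)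
            ((M * M) / (M * (b + M * (y - t))) ^ 2) t := by
          have h6 := hlin.inv hne
          exact h6.congr_deriv (by ring)
        exact (hf'' t).sub hinner)
      (fun t ht => by
        show 0 ≤ f'' t - (M * M) / (M * (b + M * (y - t))) ^ 2
        have h1 : u t ≤ b + M * (y - t) := lip2 t y ht.2
        have h2 : 0 < u t := hupos t
        have h3 : 0 < b + M * (y - t) := lt_of_lt_of_le h2 h1
        have h4 : ((b + M * (y - t)) ^ 2)⁻¹ ≤ (u t ^ 2)⁻¹ := by gcongr
        have h5 : (M * M) / (M * (b + M * (y - t))) ^ 2 = ((b + M * (y - t)) ^ 2)⁻¹ := by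
          field_simp
        rw [hfu t, h5]
        linarith)
    rw [show b + M * (y - y) = b by ring, hcb] at h
    exact h
  have hmain : f' y - f' x ≥ (M * a)⁻¹ + (M * b)⁻¹ - 2 * (M * s)⁻¹ := by linarith
  have h2s : a + b + M * (y - x) = 2 * s := by rw [hs]; ring
  have hgoal : 1 / (M * a) + 1 / (M * b) - 4 / (M * (a + b + M * (y - x)))
      = (M * a)⁻¹ + (M * b)⁻¹ - 2 * (M * s)⁻¹ := by
    rw [h2s, one_div, one_div]
    congr 1
    rw [eq_comm]
    field_simp
    ring
  calc f' y - f' x ≥ (M * a)⁻¹ + (M * b)⁻¹ - 2 * (M * s)⁻¹ := hmain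
    _ = 1 / (M * a) + 1 / (M * b) - 4 / (M * (a + b + M * (y - x))) := hgoal.symm
end

section
/- Let M, μ > 0 and define f : ℝ → ℝ by f(x) = (μ/M²)e^{-Mx} + (2μ/M)x for x ≤ 0 and f(x) = (μ/M²)e^{Mx} for x > 0. Then f is twice continuously differentiable, f''(x) ≥ μ for all x, |f'''(x)| ≤ M f''(x) wherever the third derivative exists, and the Newton step from x = 0, x₊ = 0 - f'(0)/f''(0), satisfies (M/μ)|f'(x₊)| = e^{(M/μ)|f'(0)|} - (M/μ)|f'(0)| - 1 = e - 2. -/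
open Real Set

noncomputable def NQ.F (M μ : ℝ) (x : ℝ) : ℝ :=
  if x ≤ 0 then μ / M ^ 2 * Real.exp (-M * x) + 2 * μ / M * x
  else μ / M ^ 2 * Real.exp (M * x)

noncomputable def NQ.F1 (M μ : ℝ) (x : ℝ) : ℝ :=
  if x ≤ 0 then -(μ / M) * Real.exp (-M * x) + 2 * μ / M
  else μ / M * Real.exp (M * x)

noncomputable def NQ.F2 (M μ : ℝ) (x : ℝ) : ℝ := μ * Real.exp (M * |x|)

namespace NQ
variable {M μ : ℝ}

lemma hd_p1 (hM : M ≠ 0) (x : ℝ) :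
    HasDerivAt (fun x => μ / M ^ 2 * Real.exp (-M * x) + 2 * μ / M * x)
      (-(μ / M) * Real.exp (-M * x) + 2 * μ / M) x := by
  have h1 : HasDerivAt (fun x : ℝ => -M * x) (-M) x := by
    simpa using (hasDerivAt_id x).const_mul (-M)
  have h2 := (h1.exp.const_mul (μ / M ^ 2)).add (((hasDerivAt_id x).const_mul (2 * μ / M)))
  refine h2.congr_deriv ?_
  field_simp

lemma hd_p2 (x : ℝ) :
    HasDerivAt (fun x => μ / M ^ 2 * Real.exp (M * x)) (μ / M * Real.exp (M * x)) x := by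
  have h1 : HasDerivAt (fun x : ℝ => M * x) M x := by
    simpa using (hasDerivAt_id x).const_mul M
  have h2 := h1.exp.const_mul (μ / M ^ 2)
  refine h2.congr_deriv ?_
  by_cases hM : M = 0
  · simp [hM]
  field_simp

lemma hasDerivAt_F (hM : M ≠ 0) (x : ℝ) : HasDerivAt (F M μ) (F1 M μ x) x := by
  rcases lt_trichotomy x 0 with hx | hx | hx
  · have he : F M μ =ᶠ[nhds x] fun x => μ / M ^ 2 * Real.exp (-M * x) + 2 * μ / M * x := by
      filter_upwards [Iio_mem_nhds hx] with y hy
      simp [F, (mem_Iio.mp hy).le]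
    rw [F1, if_pos hx.le]
    exact (hd_p1 hM x).congr_of_eventuallyEq he
  · subst hx
    have hL : HasDerivWithinAt (F M μ)
        (-(μ / M) * Real.exp (-M * 0) + 2 * μ / M) (Iic 0) 0 :=
      ((hd_p1 hM 0).hasDerivWithinAt).congr
        (fun y hy => by simp [F, mem_Iic.mp hy]) (by simp [F])
    have hR : HasDerivWithinAt (F M μ) (μ / M * Real.exp (M * 0)) (Ici 0) 0 :=
      ((hd_p2 (μ := μ) 0).hasDerivWithinAt).congr
        (fun y hy => by
          rcases eq_or_lt_of_le (mem_Ici.mp hy) with h | h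
          · simp [F, ← h]
          · simp [F, not_le.mpr h]) (by simp [F])
    have hval : -(μ / M) * Real.exp (-M * 0) + 2 * μ / M = F1 M μ 0 := by
      simp [F1]
    have hval2 : μ / M * Real.exp (M * 0) = F1 M μ 0 := by
      simp [F1]; ring
    rw [hval] at hL; rw [hval2] at hR
    have := hL.union hR
    rw [Iic_union_Ici] at this
    exact this.hasDerivAt (by simp)
  · have he : F M μ =ᶠ[nhds x] fun x => μ / M ^ 2 * Real.exp (M * x) := by
      filter_upwards [Ioi_mem_nhds hx] with y hy
      simp [F, not_le.mpr (mem_Ioi.mp hy)]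
    rw [F1, if_neg (not_le.mpr hx)]
    exact (hd_p2 x).congr_of_eventuallyEq he

lemma hd_q1 (hM : M ≠ 0) (x : ℝ) :
    HasDerivAt (fun x => -(μ / M) * Real.exp (-M * x) + 2 * μ / M)
      (μ * Real.exp (-M * x)) x := by
  have h1 : HasDerivAt (fun x : ℝ => -M * x) (-M) x := by
    simpa using (hasDerivAt_id x).const_mul (-M)
  have h2 := (h1.exp.const_mul (-(μ / M))).add_const (2 * μ / M)
  refine h2.congr_deriv ?_
  field_simp

lemma hd_q2 (hM : M ≠ 0) (x : ℝ) :
    HasDerivAt (fun x => μ / M * Real.exp (M * x)) (μ * Real.exp (M * x)) x := by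
  have h1 : HasDerivAt (fun x : ℝ => M * x) M x := by
    simpa using (hasDerivAt_id x).const_mul M
  have h2 := h1.exp.const_mul (μ / M)
  refine h2.congr_deriv ?_
  field_simp

lemma hasDerivAt_F1 (hM : M ≠ 0) (x : ℝ) : HasDerivAt (F1 M μ) (F2 M μ x) x := by
  rcases lt_trichotomy x 0 with hx | hx | hx
  · have he : F1 M μ =ᶠ[nhds x] fun x => -(μ / M) * Real.exp (-M * x) + 2 * μ / M := by
      filter_upwards [Iio_mem_nhds hx] with y hy
      simp [F1, (mem_Iio.mp hy).le]
    rw [show F2 M μ x = μ * Real.exp (-M * x) by rw [F2, abs_of_neg hx]; ring_nf]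
    exact (hd_q1 hM x).congr_of_eventuallyEq he
  · subst hx
    have hL : HasDerivWithinAt (F1 M μ) (μ * Real.exp (-M * 0)) (Iic 0) 0 :=
      ((hd_q1 hM 0).hasDerivWithinAt).congr
        (fun y hy => by simp [F1, mem_Iic.mp hy]) (by simp [F1])
    have hR : HasDerivWithinAt (F1 M μ) (μ * Real.exp (M * 0)) (Ici 0) 0 :=
      ((hd_q2 hM 0).hasDerivWithinAt).congr
        (fun y hy => by
          rcases eq_or_lt_of_le (mem_Ici.mp hy) with h | h
          · simp [F1, ← h]; ring
          · simp [F1, not_le.mpr h]) (by simp [F1]; ring)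
    have hval : μ * Real.exp (-M * 0) = F2 M μ 0 := by simp [F2]
    have hval2 : μ * Real.exp (M * 0) = F2 M μ 0 := by simp [F2]
    rw [hval] at hL; rw [hval2] at hR
    have := hL.union hR
    rw [Iic_union_Ici] at this
    exact this.hasDerivAt (by simp)
  · have he : F1 M μ =ᶠ[nhds x] fun x => μ / M * Real.exp (M * x) := by
      filter_upwards [Ioi_mem_nhds hx] with y hy
      simp [F1, not_le.mpr (mem_Ioi.mp hy)]
    rw [show F2 M μ x = μ * Real.exp (M * x) by rw [F2, abs_of_pos hx]]
    exact (hd_q2 hM x).congr_of_eventuallyEq he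

lemma deriv_F (hM : M ≠ 0) : deriv (F M μ) = F1 M μ :=
  funext fun x => (hasDerivAt_F hM x).deriv

lemma deriv_F1 (hM : M ≠ 0) : deriv (F1 M μ) = F2 M μ :=
  funext fun x => (hasDerivAt_F1 hM x).deriv

lemma not_diff_F2 (hM : 0 < M) (hμ : 0 < μ) : ¬ DifferentiableAt ℝ (F2 M μ) 0 := by
  intro h
  have h0p : HasDerivAt (fun x : ℝ => M * x) M 0 := by
    simpa using (hasDerivAt_id (0:ℝ)).const_mul M
  have h0n : HasDerivAt (fun x : ℝ => -M * x) (-M) 0 := by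
    simpa using (hasDerivAt_id (0:ℝ)).const_mul (-M)
  have h1p : HasDerivAt (fun x : ℝ => μ * Real.exp (M * x)) (μ * M) 0 := by
    have := h0p.exp.const_mul μ
    refine this.congr_deriv ?_
    simp
  have h1n : HasDerivAt (fun x : ℝ => μ * Real.exp (-M * x)) (-(μ * M)) 0 := by
    have := h0n.exp.const_mul μ
    refine this.congr_deriv ?_
    simp
  have hR : HasDerivWithinAt (F2 M μ) (μ * M) (Ici 0) 0 :=
    (h1p.hasDerivWithinAt).congr
      (fun y hy => by simp [F2, abs_of_nonneg (mem_Ici.mp hy)]) (by simp [F2])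
  have hL : HasDerivWithinAt (F2 M μ) (-(μ * M)) (Iic 0) 0 :=
    (h1n.hasDerivWithinAt).congr
      (fun y hy => by simp [F2, abs_of_nonpos (mem_Iic.mp hy)]) (by simp [F2])
  have e1 := hR.derivWithin (uniqueDiffOn_Ici 0 0 self_mem_Ici)
  have e2 := (h.hasDerivAt.hasDerivWithinAt (s := Ici 0)).derivWithin
    (uniqueDiffOn_Ici 0 0 self_mem_Ici)
  have e3 := hL.derivWithin (uniqueDiffOn_Iic 0 0 self_mem_Iic)
  have e4 := (h.hasDerivAt.hasDerivWithinAt (s := Iic 0)).derivWithin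
    (uniqueDiffOn_Iic 0 0 self_mem_Iic)
  have hcontra : μ * M = -(μ * M) := (e2.symm.trans e1).symm.trans (e4.symm.trans e3)
  have hpos := mul_pos hμ hM
  linarith

lemma hd_r1 (x : ℝ) : HasDerivAt (fun y : ℝ => μ * Real.exp (-M * y))
    (-(μ * M * Real.exp (-M * x))) x := by
  have h0 : HasDerivAt (fun y : ℝ => -M * y) (-M) x := by
    simpa using (hasDerivAt_id x).const_mul (-M)
  have := h0.exp.const_mul μ
  refine this.congr_deriv ?_
  ring

lemma hd_r2 (x : ℝ) : HasDerivAt (fun y : ℝ => μ * Real.exp (M * y))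
    (μ * M * Real.exp (M * x)) x := by
  have h0 : HasDerivAt (fun y : ℝ => M * y) M x := by
    simpa using (hasDerivAt_id x).const_mul M
  have := h0.exp.const_mul μ
  refine this.congr_deriv ?_
  ring

end NQ

/-- Tightness of the Newton-step bound on quasi-self-concordant strongly convex
functions, attained by an explicit piecewise exponential function. -/
theorem newton_qsc_tight (M μ : ℝ) (hM : 0 < M) (hμ : 0 < μ)
    (f : ℝ → ℝ)
    (hf : f = fun x => if x ≤ 0 then μ / M ^ 2 * Real.exp (-M * x) + 2 * μ / M * x
                       else μ / M ^ 2 * Real.exp (M * x)) :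
    ContDiff ℝ 2 f ∧
    (∀ x, deriv (deriv f) x ≥ μ) ∧
    (∀ x, DifferentiableAt ℝ (deriv (deriv f)) x →
      |deriv (deriv (deriv f)) x| ≤ M * deriv (deriv f) x) ∧
    (M / μ) * |deriv f (0 - deriv f 0 / deriv (deriv f) 0)| =
      Real.exp ((M / μ) * |deriv f 0|) - (M / μ) * |deriv f 0| - 1 ∧
    (M / μ) * |deriv f (0 - deriv f 0 / deriv (deriv f) 0)| = Real.exp 1 - 2 := by
  have hMne : M ≠ 0 := hM.ne'
  have hμne : μ ≠ 0 := hμ.ne'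
  have hF : f = NQ.F M μ := hf
  subst hF
  have d1 : deriv (NQ.F M μ) = NQ.F1 M μ := NQ.deriv_F hMne
  have d2 : deriv (deriv (NQ.F M μ)) = NQ.F2 M μ := by rw [d1, NQ.deriv_F1 hMne]
  -- numerics
  have hA : deriv (NQ.F M μ) 0 = μ / M := by
    rw [d1]; simp [NQ.F1]; ring
  have hB : deriv (deriv (NQ.F M μ)) 0 = μ := by rw [d2]; simp [NQ.F2]
  have hstep : (0 : ℝ) - deriv (NQ.F M μ) 0 / deriv (deriv (NQ.F M μ)) 0 = -(1 / M) := by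
    rw [hA, hB]; field_simp; ring
  have hxle : -(1 / M) ≤ (0 : ℝ) := neg_nonpos.mpr (by positivity)
  have hDnew : deriv (NQ.F M μ) (-(1 / M)) = -(μ / M) * Real.exp 1 + 2 * μ / M := by
    rw [d1, NQ.F1, if_pos hxle]
    congr 2
    field_simp
  have he1 : (2 : ℝ) < Real.exp 1 := by
    have := Real.exp_one_gt_d9; linarith
  have habs : |deriv (NQ.F M μ) (-(1 / M))| = μ / M * (Real.exp 1 - 2) := by
    have hpos := mul_pos (div_pos hμ hM) (sub_pos.mpr he1)
    rw [hDnew, show -(μ / M) * Real.exp 1 + 2 * μ / M = -(μ / M * (Real.exp 1 - 2)) from by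
      ring, abs_neg, abs_of_pos hpos]
  have hkey : (M / μ) * |deriv (NQ.F M μ)
      ((0 : ℝ) - deriv (NQ.F M μ) 0 / deriv (deriv (NQ.F M μ)) 0)| = Real.exp 1 - 2 := by
    rw [hstep, habs]
    field_simp
  refine ⟨?_, ?_, ?_, ?_, hkey⟩
  · rw [show (2 : WithTop ℕ∞) = 1 + 1 from rfl]
    refine contDiff_succ_iff_deriv.mpr
      ⟨fun x => (NQ.hasDerivAt_F hMne x).differentiableAt, by simp, ?_⟩
    rw [d1]
    refine contDiff_one_iff_deriv.mpr
      ⟨fun x => (NQ.hasDerivAt_F1 hMne x).differentiableAt, ?_⟩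
    rw [NQ.deriv_F1 hMne]
    unfold NQ.F2
    fun_prop
  · intro x
    rw [d2, NQ.F2]
    have h1 : (1 : ℝ) ≤ Real.exp (M * |x|) := Real.one_le_exp (by positivity)
    nlinarith
  · intro x hx
    rw [d2] at hx ⊢
    rcases lt_trichotomy x 0 with hlt | heq | hgt
    · have he : NQ.F2 M μ =ᶠ[nhds x] fun y => μ * Real.exp (-M * y) := by
        filter_upwards [Iio_mem_nhds hlt] with y hy
        rw [NQ.F2, abs_of_neg (mem_Iio.mp hy)]; ring_nf
      rw [he.deriv_eq, (NQ.hd_r1 x).deriv, NQ.F2, abs_of_neg hlt, abs_neg,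
        abs_of_pos (by positivity)]
      ring_nf
      exact le_refl _
    · exact absurd hx (heq ▸ NQ.not_diff_F2 hM hμ)
    · have he : NQ.F2 M μ =ᶠ[nhds x] fun y => μ * Real.exp (M * y) := by
        filter_upwards [Ioi_mem_nhds hgt] with y hy
        rw [NQ.F2, abs_of_pos (mem_Ioi.mp hy)]
      rw [he.deriv_eq, (NQ.hd_r2 x).deriv, NQ.F2, abs_of_pos hgt,
        abs_of_pos (by positivity)]
      ring_nf
      exact le_refl _
  · rw [hkey, hA, abs_of_pos (by positivity)]
    rw [show M / μ * (μ / M) = 1 by field_simp]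
    ring
end

section
/- Let M > 0 and f(x) = M x³/6 - x²/2. Then x₁ = -2/M is a global minimizer of x ↦ f(0) + f'(0)x + f''(0)x²/2 + (M/6)|x|³, and f(0) - f(x₁) = (5M/12)·(|f'(x₁)|/M)^(3/2), where f'(x₁) = 4/M and f(0) - f(x₁) = 10/(3M²). -/
/-- Tightness of the improved descent lemma for one iteration of the Cubic
Regularized Newton method on f(x) = Mx³/6 - x²/2, starting from x₀ = 0. -/
theorem cnm_descent_lemma_tight (M : ℝ) (hM : 0 < M)
    (f : ℝ → ℝ) (hf : f = fun x => M * x ^ 3 / 6 - x ^ 2 / 2) :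
    (∀ x : ℝ,
        f 0 + deriv f 0 * (-2 / M) + deriv (deriv f) 0 * (-2 / M) ^ 2 / 2 +
            M / 6 * |(-2 / M : ℝ)| ^ 3 ≤
          f 0 + deriv f 0 * x + deriv (deriv f) 0 * x ^ 2 / 2 + M / 6 * |x| ^ 3) ∧
    deriv f (-2 / M) = 4 / M ∧
    f 0 - f (-2 / M) = 10 / (3 * M ^ 2) ∧
    f 0 - f (-2 / M) = 5 * M / 12 * (|deriv f (-2 / M)| / M) ^ ((3 : ℝ) / 2) := by
  subst hf
  have hM' : M ≠ 0 := ne_of_gt hM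
  have h1 : deriv (fun x : ℝ => M * x ^ 3 / 6 - x ^ 2 / 2) = fun x => M * x ^ 2 / 2 - x := by
    funext x
    have h : HasDerivAt (fun x : ℝ => M * x ^ 3 / 6 - x ^ 2 / 2) (M * x ^ 2 / 2 - x) x := by
      have h := (((hasDerivAt_pow 3 x).const_mul M).div_const 6).sub
        ((hasDerivAt_pow 2 x).div_const 2)
      exact h.congr_deriv (by push_cast; ring)
    exact h.deriv
  rw [h1]
  have h2 : deriv (fun x : ℝ => M * x ^ 2 / 2 - x) = fun x => M * x - 1 := by
    funext x
    have h : HasDerivAt (fun x : ℝ => M * x ^ 2 / 2 - x) (M * x - 1) x := by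
      have h := (((hasDerivAt_pow 2 x).const_mul M).div_const 2).sub (hasDerivAt_id x)
      exact h.congr_deriv (by push_cast; ring)
    exact h.deriv
  rw [h2]
  have habs : |(-2 / M : ℝ)| = 2 / M := by
    rw [show (-2 / M : ℝ) = -(2 / M) by ring, abs_neg, abs_of_pos (by positivity)]
  have hd : (fun x : ℝ => M * x ^ 2 / 2 - x) (-2 / M) = 4 / M := by
    simp only; field_simp; ring
  refine ⟨?_, ?_, ?_, ?_⟩
  · intro x
    simp only [habs]
    have hx2 : x ^ 2 = |x| ^ 2 := (sq_abs x).symm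
    have key : 0 ≤ M / 6 * ((M * |x| - 2) ^ 2 * (M * |x| + 1)) := by positivity
    rw [show (M * 0 ^ 3 / 6 - 0 ^ 2 / 2 + (M * 0 ^ 2 / 2 - 0) * (-2 / M) +
        (M * 0 - 1) * (-2 / M) ^ 2 / 2 + M / 6 * (2 / M) ^ 3 : ℝ) = -2 / (3 * M ^ 2) by
      field_simp; ring]
    rw [div_le_iff₀ (by positivity : (0 : ℝ) < 3 * M ^ 2)]
    nlinarith [key, pow_pos hM 3, sq_nonneg M]
  · exact hd
  · simp only; field_simp; ring
  · rw [hd, abs_of_pos (by positivity : (0:ℝ) < 4 / M),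
      show (4 / M / M : ℝ) = (2 / M) ^ 2 by field_simp; ring,
      ← Real.rpow_natCast ((2 / M : ℝ)) 2, ← Real.rpow_mul (by positivity)]
    rw [show ((2 : ℕ) : ℝ) * (3 / 2) = ((3 : ℕ) : ℝ) by norm_num, Real.rpow_natCast]
    simp only; field_simp; ring
end

section
/- Let M > 0 and η₀ > 0, and set h₁* = h₀·e^{-η₀/(η₀+1)}, g₁* = g₀ + (h₁* - h₀)/M where g₀ = 1, h₀ = M/η₀. Then M·|g₁*|/h₁* = e^{η₀/(η₀+1)}·(η₀ - 1) + 1. Moreover, the function φ(η) = e^{η/(η+1)}(η-1) + 1 satisfies φ(η) ≤ e^{η}(e^{η} + η² - η - 1) for all η ≥ 0. -/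
set_option maxHeartbeats 1000000 in
/-- Algebraic verification of the improved one-step worst-case value for the
Gradient Regularized Newton method on quasi-self-concordant functions, and
comparison with the previously known bound. -/
theorem grn_qsc_one_step (M η₀ : ℝ) (hM : 0 < M) (hη₀ : 0 < η₀)
    (g₀ h₀ h₁ g₁ : ℝ)
    (hg₀ : g₀ = 1) (hh₀ : h₀ = M / η₀)
    (hh₁ : h₁ = h₀ * Real.exp (-η₀ / (η₀ + 1)))
    (hg₁ : g₁ = g₀ + (h₁ - h₀) / M) :
    M * |g₁| / h₁ = Real.exp (η₀ / (η₀ + 1)) * (η₀ - 1) + 1 ∧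
    (∀ η : ℝ, 0 ≤ η →
      Real.exp (η / (η + 1)) * (η - 1) + 1 ≤
        Real.exp η * (Real.exp η + η ^ 2 - η - 1)) := by
  have hden : (0:ℝ) < η₀ + 1 := by linarith
  set t := η₀ / (η₀ + 1) with ht
  have hE : 0 < Real.exp t := Real.exp_pos t
  have hexp : Real.exp (-η₀ / (η₀ + 1)) = (Real.exp t)⁻¹ := by
    rw [← Real.exp_neg, ht]; ring_nf
  have hlb : 1 - t ≤ (Real.exp t)⁻¹ := by
    have := Real.add_one_le_exp (-t)
    rwa [Real.exp_neg, neg_add_eq_sub] at this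
  have h1mt : 1 - t = 1 / (η₀ + 1) := by rw [ht]; field_simp; ring
  have hinv : (η₀ + 1) * (1 / (η₀ + 1)) = 1 := by field_simp
  have hg₁' : g₁ = 1 + ((Real.exp t)⁻¹ - 1) / η₀ := by
    rw [hg₁, hh₁, hh₀, hg₀, hexp]; field_simp
  have hg₁nn : 0 ≤ g₁ := by
    rw [hg₁']
    have h2 : 1 / (η₀ + 1) ≤ (Real.exp t)⁻¹ := by linarith [hlb, h1mt.symm.le]
    have : 0 ≤ ((Real.exp t)⁻¹ - 1 + η₀) / η₀ := by
      apply div_nonneg _ hη₀.le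
      nlinarith [sq_nonneg η₀]
    rw [add_div, div_self hη₀.ne'] at this
    linarith
  constructor
  · rw [abs_of_nonneg hg₁nn, hg₁', hh₁, hh₀, hexp]
    field_simp
    ring
  · intro η hη
    have hd : (0:ℝ) < η + 1 := by linarith
    set s := η / (η + 1) with hs
    have hsnn : 0 ≤ s := div_nonneg hη hd.le
    have hseq : s * (η + 1) = η := by rw [hs]; field_simp
    have hsle : s ≤ η := by nlinarith
    have hab : Real.exp s ≤ Real.exp η := Real.exp_le_exp.mpr hsle
    have hb1 : η + 1 ≤ Real.exp η := Real.add_one_le_exp η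
    have hEs : 0 < Real.exp s := Real.exp_pos s
    have hEη : 0 < Real.exp η := Real.exp_pos η
    rcases le_total 1 η with h1 | h1
    · nlinarith [mul_le_mul_of_nonneg_right hab (by linarith : (0:ℝ) ≤ η - 1),
        mul_pos hEη hEη, sq_nonneg (η - 1)]
    · have hq_s : 1 + s + s ^ 2 / 2 ≤ Real.exp s := Real.quadratic_le_exp_of_nonneg hsnn
      have hq : 1 + η + η ^ 2 / 2 ≤ Real.exp η := Real.quadratic_le_exp_of_nonneg hη
      have hrhs : Real.exp s * (η - 1) ≤ (1 + s + s ^ 2 / 2) * (η - 1) := by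
        apply mul_le_mul_of_nonpos_right hq_s (by linarith)
      have hs1 : s ≤ 1 := by nlinarith
      have key : (1 + s + s ^ 2 / 2) * (η - 1) + 1 ≤
          Real.exp η * (Real.exp η + η ^ 2 - η - 1) := by
        have hfac : (3:ℝ)/2 * η ^ 2 ≤ Real.exp η + η ^ 2 - η - 1 := by linarith
        have hprod : (1 + η) * ((3:ℝ)/2 * η ^ 2) ≤ Real.exp η * (Real.exp η + η ^ 2 - η - 1) := by
          have h0 : (0:ℝ) ≤ (3:ℝ)/2 * η ^ 2 := by positivity
          exact mul_le_mul (by linarith) hfac h0 hEη.le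
        have hexpand : (1 + s + s ^ 2 / 2) * (η - 1) + 1
            = (5 * η ^ 3 + 3 * η ^ 2) / (2 * (η + 1) ^ 2) := by
          rw [hs]; field_simp; ring
        have hle : (5 * η ^ 3 + 3 * η ^ 2) / (2 * (η + 1) ^ 2) ≤ (1 + η) * ((3:ℝ)/2 * η ^ 2) := by
          rw [div_le_iff₀ (by positivity)]
          nlinarith [mul_nonneg hη hη, mul_nonneg (mul_nonneg hη hη) hη, sq_nonneg η]
        rw [hexpand]
        linarith
      linarith
end
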